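/- arXiv:0805.0359 — 6 statements merged into one kernel-verified Lean document; each statement's English description precedes it below -/
import Mathlib

section
/- For an endomorphism φ of a right R-module M, φ is strongly clean in End(M_R) if and only if there is a decomposition M = P ⊕ Q where P and Q are φ-invariant submodules, φ restricted to P is an automorphism of P, and (1 - φ) restricted to Q is an automorphism of Q. -/
/-!
An idempotent `e` commutes with `φ` exactly when `ker e` and `range e` are `φ`-invariant, and
`M = ker e ⊕ range e`. If `φ = e + u` with `u` a unit commuting with `e`, then `u` and `u⁻¹`
preserve both summands, `φ = u` on `ker e` and `1 - φ = -u` on `range e`. Conversely, for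
`M = P ⊕ Q` let `e` be the projection onto `Q` along `P`: it commutes with `φ`, and `u = φ - e`
is `φ` on `P` and `-(1 - φ)` on `Q`, hence bijective.
-/

/-- An element of a ring is strongly clean if it is the sum of an idempotent and a unit
that commute with each other. -/
def IsStronglyClean {S : Type*} [Ring S] (a : S) : Prop :=
  ∃ e u : S, IsIdempotentElem e ∧ IsUnit u ∧ a = e + u ∧ e * u = u * e

open LinearMap Function

namespace Module.End

variable {R M : Type*} [Ring R] [AddCommGroup M] [Module R M]

theorem bijective_restrict_unit {u : (Module.End R M)ˣ} {N : Submodule R M}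
    (hu : ∀ x ∈ N, (u : Module.End R M) x ∈ N) (hu' : ∀ x ∈ N, (↑u⁻¹ : Module.End R M) x ∈ N) :
    Bijective ((u : Module.End R M).restrict hu) :=
  bijective_iff_has_inverse.mpr ⟨(↑u⁻¹ : Module.End R M).restrict hu',
    fun x => Subtype.ext (LinearMap.congr_fun u.inv_mul x),
    fun x => Subtype.ext (LinearMap.congr_fun u.mul_inv x)⟩

theorem bijective_of_isCompl_of_bijective_restrict {f : Module.End R M} {p q : Submodule R M}
    (hpq : IsCompl p q) (hp : ∀ x ∈ p, f x ∈ p) (hq : ∀ x ∈ q, f x ∈ q)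
    (hfp : Bijective (f.restrict hp)) (hfq : Bijective (f.restrict hq)) : Bijective f := by
  let σ := p.prodEquivOfIsCompl q hpq
  have hconj : f ∘ σ = σ ∘ Prod.map (f.restrict hp) (f.restrict hq) := by
    funext ⟨x, y⟩
    simp [σ]
  rw [← Bijective.of_comp_iff f σ.bijective, hconj]
  exact σ.bijective.comp (hfp.prodMap hfq)

variable {e : Module.End R M} {u : (Module.End R M)ˣ}

theorem bijective_restrict_add_unit_ker (he : IsIdempotentElem e) (hc : Commute e u)
    (h : ∀ x ∈ ker e, (e + u) x ∈ ker e) : Bijective ((e + u).restrict h) := by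
  have hu : ∀ x ∈ ker e, (u : Module.End R M) x ∈ ker e :=
    ((IsIdempotentElem.commute_iff he).mp hc).2
  have hu' : ∀ x ∈ ker e, (↑u⁻¹ : Module.End R M) x ∈ ker e :=
    ((IsIdempotentElem.commute_iff he).mp hc.units_inv_right).2
  convert bijective_restrict_unit hu hu' using 2
  ext x
  simp [mem_ker.mp x.2, coe_restrict_apply]

theorem bijective_restrict_one_sub_add_unit_range (he : IsIdempotentElem e) (hc : Commute e u)
    (h : ∀ x ∈ range e, (1 - (e + u)) x ∈ range e) :
    Bijective ((1 - (e + u)).restrict h) := by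
  have hu : ∀ x ∈ range e, (u : Module.End R M) x ∈ range e :=
    ((IsIdempotentElem.commute_iff he).mp hc).1
  have hu' : ∀ x ∈ range e, (↑u⁻¹ : Module.End R M) x ∈ range e :=
    ((IsIdempotentElem.commute_iff he).mp hc.units_inv_right).1
  have hneg : (1 - (e + u)).restrict h = -(u : Module.End R M).restrict hu := by
    ext ⟨x, hx⟩
    simp [(IsIdempotentElem.mem_range_iff he).mp hx]
  rw [hneg, LinearMap.coe_neg]
  exact neg_involutive.bijective.comp (bijective_restrict_unit hu hu')

end Module.End

namespace Submodule

variable {R M : Type*} [Ring R] [AddCommGroup M] [Module R M] {p q : Submodule R M}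
  {φ : Module.End R M}

theorem commute_projection (hpq : IsCompl p q) (hp : ∀ x ∈ p, φ x ∈ p)
    (hq : ∀ x ∈ q, φ x ∈ q) : Commute (p.projection q hpq) φ :=
  (IsIdempotentElem.commute_iff (isIdempotentElem_projection hpq)).mpr
    ⟨by rwa [range_projection], by rwa [ker_projection]⟩

theorem isUnit_sub_projection (hpq : IsCompl p q) (hp : ∀ x ∈ p, φ x ∈ p)
    (hq : ∀ x ∈ q, φ x ∈ q) (hφq : Bijective (φ.restrict hq))
    (hφp : Bijective ((1 - φ).restrict fun x hx => p.sub_mem hx (hp x hx))) :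
    IsUnit (φ - p.projection q hpq) := by
  have h₀ : ∀ x ∈ q, p.projection q hpq x = 0 := fun x hx =>
    projection_apply_of_mem_right hpq hx
  have h₁ : ∀ x ∈ p, p.projection q hpq x = x := fun x hx =>
    projection_apply_of_mem_left hpq hx
  have hp' : ∀ x ∈ p, (φ - p.projection q hpq) x ∈ p := fun x hx =>
    p.sub_mem (hp x hx) (projection_apply_mem hpq x)
  have hq' : ∀ x ∈ q, (φ - p.projection q hpq) x ∈ q := fun x hx => by
    simpa [h₀ x hx] using hq x hx
  rw [Module.End.isUnit_iff]
  refine Module.End.bijective_of_isCompl_of_bijective_restrict hpq hp' hq' ?_ ?_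
  · have hneg : (φ - p.projection q hpq).restrict hp' =
        -(1 - φ).restrict fun x hx => p.sub_mem hx (hp x hx) := by
      ext ⟨x, hx⟩
      simp [h₁ x hx, coe_restrict_apply]
    rw [hneg, LinearMap.coe_neg]
    exact neg_involutive.bijective.comp hφp
  · convert hφq using 2
    ext ⟨x, hx⟩
    simp [h₀ x hx, coe_restrict_apply]

end Submodule

open Submodule Module.End in
/-- Nicholson: an endomorphism of a module is strongly clean iff the module decomposes as
`P ⊕ Q` with both summands `φ`-invariant, `φ` an automorphism of `P`, and `1 - φ` an
automorphism of `Q`. -/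
theorem stronglyClean_end_iff {R M : Type*} [Ring R] [AddCommGroup M] [Module R M]
    (φ : Module.End R M) :
    IsStronglyClean φ ↔
      ∃ (P Q : Submodule R M), IsCompl P Q ∧
        ∃ (hP : ∀ x ∈ P, φ x ∈ P) (hQ : ∀ x ∈ Q, φ x ∈ Q),
          Function.Bijective (fun x : P => (⟨φ x.1, hP x.1 x.2⟩ : P)) ∧
          Function.Bijective
            (fun x : Q => (⟨x.1 - φ x.1, Q.sub_mem x.2 (hQ x.1 x.2)⟩ : Q)) := by
  constructor
  · rintro ⟨e, u, he, hu, rfl, hcomm⟩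
    lift u to (Module.End R M)ˣ using hu
    obtain ⟨hrange, hker⟩ :=
      (IsIdempotentElem.commute_iff he).mp ((Commute.refl e).add_right hcomm)
    exact ⟨ker e, range e, he.isCompl.symm, hker, hrange,
      bijective_restrict_add_unit_ker he hcomm hker,
      bijective_restrict_one_sub_add_unit_range he hcomm fun x hx => sub_mem hx (hrange hx)⟩
  · rintro ⟨P, Q, hc, hP, hQ, hφP, hφQ⟩
    exact ⟨Q.projection P hc.symm, φ - Q.projection P hc.symm,
      isIdempotentElem_projection _, isUnit_sub_projection hc.symm hQ hP hφP hφQ, by abel,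
      ((commute_projection hc.symm hQ hP).sub_right (Commute.refl _)).eq⟩
end

section
/- For an endomorphism φ of a right R-module M, φ is strongly π-regular in End(M_R) if and only if there is a decomposition M = P ⊕ Q where P and Q are φ-invariant, φ restricted to P is an automorphism, and φ restricted to Q is nilpotent. -/
/-- An element of a ring is strongly π-regular if both chains `aS ⊇ a²S ⊇ ⋯` and
`Sa ⊇ Sa² ⊇ ⋯` terminate; equivalently `aⁿ ∈ aⁿ⁺¹S` and `aᵐ ∈ Saᵐ⁺¹` for some `n, m`. -/
def IsStronglyPiRegular {S : Type*} [Ring S] (a : S) : Prop :=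
  (∃ (n : ℕ) (x : S), a ^ n = a ^ (n + 1) * x) ∧
  (∃ (n : ℕ) (x : S), a ^ n = x * a ^ (n + 1))

/-!
Raising the exponents to a common `N`, strong π-regularity gives `φᴺ = φ²ᴺ x = y φ²ᴺ`, which
splits `M = im φᴺ ⊕ ker φᴺ` (Fitting decomposition); `φᴺ = φᴺ⁺¹ x = y φᴺ⁺¹` makes `φ` bijective
on `im φᴺ`, and `φ` is nilpotent on `ker φᴺ`. Conversely, the inverse of `φ` on `P`, extended
by `0` on `Q`, commutes with `φ` and satisfies `φⁿ⁺¹ ψ = φⁿ`, so `φⁿ = φⁿ⁺¹ ψ = ψ φⁿ⁺¹`.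
-/

section Monoid

variable {S : Type*} [Monoid S] {a x : S} {n : ℕ}

theorem pow_eq_pow_add_mul_pow (h : a ^ n = a ^ (n + 1) * x) (k : ℕ) :
    a ^ n = a ^ (n + k) * x ^ k := by
  induction k with
  | zero => simp
  | succ k ih =>
    calc a ^ n = a ^ k * a ^ n * x ^ k := by rw [← pow_add, add_comm k, ← ih]
      _ = a ^ (n + (k + 1)) * x ^ (k + 1) := by
        rw [h, ← mul_assoc, ← pow_add, mul_assoc, ← pow_succ', add_left_comm]

theorem pow_eq_pow_mul_pow_add (h : a ^ n = x * a ^ (n + 1)) (k : ℕ) :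
    a ^ n = x ^ k * a ^ (n + k) := by
  induction k with
  | zero => simp
  | succ k ih =>
    calc a ^ n = x ^ k * (a ^ n * a ^ k) := by rw [← pow_add, ← ih]
      _ = x ^ (k + 1) * a ^ (n + (k + 1)) := by
        rw [h, mul_assoc, ← pow_add, ← mul_assoc, ← pow_succ, add_right_comm, add_assoc]

end Monoid

section Ring

variable {S : Type*} [Ring S] {a : S}

theorem IsStronglyPiRegular.exists_pow_eq (ha : IsStronglyPiRegular a) :
    ∃ (N : ℕ) (x y : S), a ^ N = a ^ (N + 1) * x ∧ a ^ N = y * a ^ (N + 1) := by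
  obtain ⟨⟨n, x, hx⟩, ⟨m, y, hy⟩⟩ := ha
  refine ⟨m + n, x, y, ?_, ?_⟩
  · rw [pow_add, hx, ← mul_assoc, ← pow_add, add_assoc]
  · rw [pow_add, hy, mul_assoc, ← pow_add, add_right_comm]

theorem IsStronglyPiRegular.of_commute {b : S} (hab : Commute a b) {n : ℕ}
    (h : a ^ (n + 1) * b = a ^ n) : IsStronglyPiRegular a :=
  ⟨⟨n, b, h.symm⟩, ⟨n, b, by rw [← (hab.pow_left (n + 1)).eq, h]⟩⟩

end Ring

theorem LinearMap.ext_of_isCompl {R M N : Type*} [Ring R] [AddCommGroup M] [Module R M]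
    [AddCommGroup N] [Module R N] {p q : Submodule R M} (h : IsCompl p q) {f g : M →ₗ[R] N}
    (hp : ∀ v ∈ p, f v = g v) (hq : ∀ v ∈ q, f v = g v) : f = g :=
  (LinearMap.ofIsCompl_eq' h rfl rfl).symm.trans
    (LinearMap.ofIsCompl_eq h (fun u ↦ hp u u.2) fun u ↦ hq u u.2)

namespace Module.End

variable {R M : Type*} [Ring R] [AddCommGroup M] [Module R M]

theorem isCompl_range_ker_of_mul_mul_eq {g x y : End R M} (hx : g * g * x = g)
    (hy : y * (g * g) = g) : IsCompl (LinearMap.range g) (LinearMap.ker g) := by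
  refine ⟨Submodule.disjoint_def.2 ?_, Submodule.codisjoint_iff_exists_add_eq.2 fun v ↦ ?_⟩
  · rintro _ ⟨w, rfl⟩ (hw : g (g w) = 0)
    rw [← hy, mul_apply, mul_apply, hw, map_zero]
  · refine ⟨g (x v), v - g (x v), ⟨x v, rfl⟩, ?_, add_sub_cancel _ _⟩
    rw [LinearMap.mem_ker, map_sub, ← mul_apply, ← mul_apply, hx, sub_self]

theorem mapsTo_range_pow (φ : End R M) (N : ℕ) :
    ∀ v ∈ LinearMap.range (φ ^ N), φ v ∈ LinearMap.range (φ ^ N) := by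
  rintro _ ⟨w, rfl⟩
  exact ⟨φ w, by rw [← mul_apply, ← mul_apply, pow_mul_comm']⟩

theorem mapsTo_ker_pow (φ : End R M) (N : ℕ) :
    ∀ v ∈ LinearMap.ker (φ ^ N), φ v ∈ LinearMap.ker (φ ^ N) := by
  intro v (hv : (φ ^ N) v = 0)
  rw [LinearMap.mem_ker, ← mul_apply, pow_mul_comm', mul_apply, hv, map_zero]

theorem bijective_restrict_range_pow {φ x y : End R M} {N : ℕ} (hx : φ ^ N = φ ^ (N + 1) * x)
    (hy : φ ^ N = y * φ ^ (N + 1)) : Function.Bijective (φ.restrict (φ.mapsTo_range_pow N)) := by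
  refine ⟨(injective_iff_map_eq_zero _).2 ?_, ?_⟩
  · rintro ⟨_, w, rfl⟩ hw
    have hw : φ ((φ ^ N) w) = 0 := congrArg Subtype.val hw
    ext
    change (φ ^ N) w = 0
    rw [hy, mul_apply, pow_succ', mul_apply, hw, map_zero]
  · rintro ⟨_, w, rfl⟩
    refine ⟨⟨(φ ^ N) (x w), x w, rfl⟩, Subtype.ext ?_⟩
    change φ ((φ ^ N) (x w)) = (φ ^ N) w
    rw [← mul_apply, ← pow_succ', hx, mul_apply]

theorem isStronglyPiRegular_of_isCompl {φ : End R M} {P Q : Submodule R M} (hPQ : IsCompl P Q)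
    (hP : ∀ v ∈ P, φ v ∈ P) (hQ : ∀ v ∈ Q, φ v ∈ Q) (hbij : Function.Bijective (φ.restrict hP))
    {n : ℕ} (hnil : ∀ v ∈ Q, (φ ^ n) v = 0) : IsStronglyPiRegular φ := by
  let e := LinearEquiv.ofBijective (φ.restrict hP) hbij
  -- the Drazin inverse of `φ`: inverse to `φ` on `P`, zero on `Q`
  let ψ : End R M := LinearMap.ofIsCompl hPQ (P.subtype ∘ₗ e.symm.toLinearMap) 0
  have hψP : ∀ p : P, ψ p = e.symm p := LinearMap.ofIsCompl_apply_left hPQ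
  have hψQ : ∀ v ∈ Q, ψ v = 0 := fun v hv ↦ LinearMap.ofIsCompl_apply_right hPQ ⟨v, hv⟩
  have hφψ : ∀ v ∈ P, φ (ψ v) = v := fun v hv ↦ by
    rw [hψP ⟨v, hv⟩]
    exact congrArg Subtype.val (e.apply_symm_apply ⟨v, hv⟩)
  have hψφ : ∀ v ∈ P, ψ (φ v) = v := fun v hv ↦ by
    rw [hψP ⟨φ v, hP v hv⟩]
    exact congrArg Subtype.val (e.symm_apply_apply ⟨v, hv⟩)
  refine .of_commute (b := ψ) (n := n) ?_ ?_
  · refine LinearMap.ext_of_isCompl hPQ (fun v hv ↦ ?_) fun v hv ↦ ?_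
    · rw [mul_apply, mul_apply, hφψ v hv, hψφ v hv]
    · rw [mul_apply, mul_apply, hψQ v hv, hψQ _ (hQ v hv), map_zero]
  · refine LinearMap.ext_of_isCompl hPQ (fun v hv ↦ ?_) fun v hv ↦ ?_
    · rw [pow_succ, mul_apply, mul_apply, hφψ v hv]
    · rw [mul_apply, hψQ v hv, map_zero, hnil v hv]

end Module.End

/-- An endomorphism of a module is strongly π-regular iff the module decomposes as
`P ⊕ Q` with both summands `φ`-invariant, `φ` an automorphism of `P`, and `φ`
nilpotent on `Q`. -/
theorem stronglyPiRegular_end_iff {R M : Type*} [Ring R] [AddCommGroup M] [Module R M]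
    (φ : Module.End R M) :
    IsStronglyPiRegular φ ↔
      ∃ (P Q : Submodule R M), IsCompl P Q ∧
        ∃ (hP : ∀ x ∈ P, φ x ∈ P) (_hQ : ∀ x ∈ Q, φ x ∈ Q),
          Function.Bijective (fun x : P => (⟨φ x.1, hP x.1 x.2⟩ : P)) ∧
          ∃ n : ℕ, ∀ x ∈ Q, (φ ^ n) x = 0 := by
  refine ⟨fun h ↦ ?_, fun ⟨P, Q, hPQ, hP, hQ, hbij, n, hnil⟩ ↦
    Module.End.isStronglyPiRegular_of_isCompl hPQ hP hQ hbij hnil⟩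
  obtain ⟨N, x, y, hx, hy⟩ := h.exists_pow_eq
  have hpow_right : φ ^ N * φ ^ N * x ^ N = φ ^ N := by rw [← pow_add, ← pow_eq_pow_add_mul_pow hx]
  have hpow_left : y ^ N * (φ ^ N * φ ^ N) = φ ^ N := by rw [← pow_add, ← pow_eq_pow_mul_pow_add hy]
  exact ⟨_, _, Module.End.isCompl_range_ker_of_mul_mul_eq hpow_right hpow_left,
    φ.mapsTo_range_pow N, φ.mapsTo_ker_pow N, Module.End.bijective_restrict_range_pow hx hy,
    N, fun _ hv ↦ hv⟩
end

section
/- Let R be a projective-free ring and A an n×n matrix over R. Then A is a non-trivial strongly clean matrix if and only if A is similar to a block diagonal matrix diag(T₀, T₁) where T₀ and I - T₁ are invertible while neither I - T₀ nor T₁ is invertible. -/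
/-- A ring is projective-free if every finitely generated projective module is free,
of unique rank. -/
def IsProjectiveFree (R : Type) [Ring R] : Prop :=
  InvariantBasisNumber R ∧
    ∀ (M : Type) [AddCommGroup M] [Module R M],
      Module.Finite R M → Module.Projective R M → Module.Free R M

open Matrix

section StronglyClean

variable {S S' : Type*} [Ring S] [Ring S']

theorem IsStronglyClean.map {F : Type*} [FunLike F S S'] [RingHomClass F S S'] (f : F) {a : S}
    (ha : IsStronglyClean a) : IsStronglyClean (f a) := by
  obtain ⟨e, u, he, hu, rfl, heu⟩ := ha
  exact ⟨f e, f u, he.map f, hu.map f, map_add f e u, by rw [← map_mul, heu, map_mul]⟩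

def IsNontrivialStronglyClean (a : S) : Prop :=
  IsStronglyClean a ∧ ¬IsUnit a ∧ ¬IsUnit (1 - a)

theorem RingEquiv.isNontrivialStronglyClean_map_iff (σ : S ≃+* S') {a : S} :
    IsNontrivialStronglyClean (σ a) ↔ IsNontrivialStronglyClean a := by
  refine and_congr ⟨fun h ↦ ?_, .map σ⟩ ?_
  · simpa using h.map σ.symm
  · rw [← map_one σ, ← map_sub, MulEquiv.isUnit_map, MulEquiv.isUnit_map]

end StronglyClean

namespace Matrix

theorem fromBlocks_sub {α l m n o : Type*} [Sub α] (A A' : Matrix n l α) (B B' : Matrix n m α)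
    (C C' : Matrix o l α) (D D' : Matrix o m α) :
    fromBlocks A B C D - fromBlocks A' B' C' D' =
      fromBlocks (A - A') (B - B') (C - C') (D - D') := by
  ext (i | i) (j | j) <;> rfl

variable {R : Type*} [Ring R] {m n : Type*} [Fintype m] [Fintype n] [DecidableEq m]
  [DecidableEq n]

theorem isUnit_fromBlocks_zero_zero_iff {a : Matrix m m R} {d : Matrix n n R} :
    IsUnit (fromBlocks a 0 0 d) ↔ IsUnit a ∧ IsUnit d := by
  simp only [isUnit_iff_exists]
  constructor
  · rintro ⟨W, hr, hl⟩
    rw [← fromBlocks_toBlocks W, fromBlocks_multiply, ← fromBlocks_one] at hr hl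
    simp only [Matrix.zero_mul, Matrix.mul_zero, add_zero, zero_add, fromBlocks_inj] at hr hl
    exact ⟨⟨_, hr.1, hl.1⟩, ⟨_, hr.2.2.2, hl.2.2.2⟩⟩
  · rintro ⟨⟨a', ha, ha'⟩, ⟨d', hd, hd'⟩⟩
    refine ⟨fromBlocks a' 0 0 d', ?_, ?_⟩ <;> simp [fromBlocks_multiply, *]

omit [DecidableEq m] in
theorem eq_fromBlocks_of_commute {V : Matrix (m ⊕ n) (m ⊕ n) R}
    (hV : Commute (fromBlocks 0 0 0 1) V) : V = fromBlocks V.toBlocks₁₁ 0 0 V.toBlocks₂₂ := by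
  have h := hV.eq
  rw [← fromBlocks_toBlocks V, fromBlocks_multiply, fromBlocks_multiply] at h
  simp only [Matrix.zero_mul, Matrix.mul_zero, Matrix.one_mul, Matrix.mul_one, add_zero,
    zero_add, fromBlocks_inj] at h
  conv_lhs => rw [← fromBlocks_toBlocks V, ← h.2.1, h.2.2.1]

theorem exists_fromBlocks_eq_add_of_commute {V : Matrix (m ⊕ n) (m ⊕ n) R} (hV : IsUnit V)
    (hDV : Commute (fromBlocks 0 0 0 1) V) :
    ∃ (T₀ : Matrix m m R) (T₁ : Matrix n n R),
      fromBlocks 0 0 0 1 + V = fromBlocks T₀ 0 0 T₁ ∧ IsUnit T₀ ∧ IsUnit (1 - T₁) := by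
  rw [eq_fromBlocks_of_commute hDV, isUnit_fromBlocks_zero_zero_iff] at hV
  refine ⟨V.toBlocks₁₁, 1 + V.toBlocks₂₂, ?_, hV.1, by simpa using hV.2.neg⟩
  rw [eq_fromBlocks_of_commute hDV, fromBlocks_add]
  simp

theorem isNontrivialStronglyClean_fromBlocks_iff {T₀ : Matrix m m R} {T₁ : Matrix n n R}
    (h₀ : IsUnit T₀) (h₁ : IsUnit (1 - T₁)) :
    IsNontrivialStronglyClean (fromBlocks T₀ 0 0 T₁) ↔ ¬IsUnit (1 - T₀) ∧ ¬IsUnit T₁ := by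
  have hclean : IsStronglyClean (fromBlocks T₀ 0 0 T₁) := by
    refine ⟨fromBlocks 0 0 0 1, fromBlocks T₀ 0 0 (T₁ - 1), ?_, ?_, ?_, ?_⟩
    · simp [IsIdempotentElem, fromBlocks_multiply]
    · rw [isUnit_fromBlocks_zero_zero_iff]
      exact ⟨h₀, by simpa using h₁.neg⟩
    · simp [fromBlocks_add]
    · simp [fromBlocks_multiply]
  rw [IsNontrivialStronglyClean, ← fromBlocks_one, fromBlocks_sub, sub_zero, sub_zero,
    isUnit_fromBlocks_zero_zero_iff, isUnit_fromBlocks_zero_zero_iff]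
  simp [hclean, h₀, h₁, and_comm]

def conjRingEquiv (P : Matrix m n R) (Q : Matrix n m R) (hPQ : P * Q = 1) (hQP : Q * P = 1) :
    Matrix n n R ≃+* Matrix m m R where
  toFun M := P * M * Q
  invFun M := Q * M * P
  left_inv M := by
    simp only [Matrix.mul_assoc, hQP, Matrix.mul_one, ← Matrix.mul_assoc Q P, Matrix.one_mul]
  right_inv M := by
    simp only [Matrix.mul_assoc, hPQ, Matrix.mul_one, ← Matrix.mul_assoc P Q, Matrix.one_mul]
  map_mul' M N := by simp only [Matrix.mul_assoc, ← Matrix.mul_assoc Q P, hQP, Matrix.one_mul]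
  map_add' M N := by rw [Matrix.mul_add, Matrix.add_mul]

-- Over a noncommutative ring only the row action `v ↦ v ᵥ* M` is `R`-linear.
theorem exists_eq_mul_mul_of_linearEquiv (g : (m → R) ≃ₗ[R] (n → R)) {E : Matrix m m R}
    {X : Matrix n n R} (h : g.toLinearMap ∘ₗ toLinearMapRight' E = toLinearMapRight' X ∘ₗ g) :
    ∃ (P : Matrix m n R) (Q : Matrix n m R), P * Q = 1 ∧ Q * P = 1 ∧ E = P * X * Q := by
  refine ⟨LinearMap.toMatrixRight' g, LinearMap.toMatrixRight' g.symm, ?_, ?_, ?_⟩ <;>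
    apply toLinearMapRight'.injective <;> ext1 v <;>
    simp [toLinearMapRight'_mul, ← h, ← LinearMap.comp_assoc]

end Matrix

namespace IsProjectiveFree

variable {R : Type} [Ring R] (hR : IsProjectiveFree R)
include hR

theorem free_of_isCompl {M : Type} [AddCommGroup M] [Module R M] [Module.Finite R M]
    [Module.Projective R M] {p q : Submodule R M} (h : IsCompl p q) : Module.Free R p :=
  hR.2 p (.equiv (q.quotientEquivOfIsCompl p h.symm))
    (.of_split p.subtype (p.projectionOnto q h) (p.projectionOnto_comp_subtype h))

theorem exists_basis_of_isIdempotentElem {M : Type} [AddCommGroup M] [Module R M]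
    [Module.Finite R M] [Module.Projective R M] {f : M →ₗ[R] M} (hf : IsIdempotentElem f) :
    ∃ (k l : ℕ) (b : Module.Basis (Fin k ⊕ Fin l) R M),
      (∀ i, f (b (.inl i)) = 0) ∧ ∀ i, f (b (.inr i)) = b (.inr i) := by
  have hc := (LinearMap.IsIdempotentElem.isCompl hf).symm
  have := hR.free_of_isCompl hc
  have := hR.free_of_isCompl hc.symm
  have := Module.Finite.equiv ((LinearMap.range f).quotientEquivOfIsCompl _ hc.symm)
  have := Module.Finite.equiv ((LinearMap.ker f).quotientEquivOfIsCompl _ hc)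
  let b₀ := (Module.Free.chooseBasis R (LinearMap.ker f)).reindex (Fintype.equivFin _)
  let b₁ := (Module.Free.chooseBasis R (LinearMap.range f)).reindex (Fintype.equivFin _)
  refine ⟨_, _, (b₀.prod b₁).map (Submodule.prodEquivOfIsCompl _ _ hc), fun i ↦ ?_, fun i ↦ ?_⟩
  · simp [b₀]
  · simpa using (LinearMap.IsIdempotentElem.mem_range_iff hf).1 (b₁ i).2

theorem exists_eq_conj_fromBlocks_zero_one {n : ℕ} {E : Matrix (Fin n) (Fin n) R}
    (hE : IsIdempotentElem E) :
    ∃ (k l : ℕ) (P : Matrix (Fin n) (Fin (k + l)) R) (Q : Matrix (Fin (k + l)) (Fin n) R),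
      P * Q = 1 ∧ Q * P = 1 ∧
      E = P * reindex finSumFinEquiv finSumFinEquiv
        (fromBlocks (0 : Matrix (Fin k) (Fin k) R) 0 0 (1 : Matrix (Fin l) (Fin l) R)) * Q := by
  have hf : IsIdempotentElem (toLinearMapRight' E) := by
    rw [IsIdempotentElem, Module.End.mul_eq_comp, ← toLinearMapRight'_mul, hE.eq]
  obtain ⟨k, l, b, h₀, h₁⟩ := hR.exists_basis_of_isIdempotentElem hf
  refine ⟨k, l, exists_eq_mul_mul_of_linearEquiv (b.reindex finSumFinEquiv).equivFun ?_⟩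
  refine (b.reindex finSumFinEquiv).ext fun j ↦ ?_
  obtain ⟨i | i, rfl⟩ := finSumFinEquiv.surjective j <;> ext t <;>
    obtain ⟨s | s, rfl⟩ := finSumFinEquiv.surjective t <;>
    simp [h₀, h₁, Finsupp.single_eq_pi_single, Pi.single_apply, one_apply, eq_comm,
      -finSumFinEquiv_apply_left, -finSumFinEquiv_apply_right]

end IsProjectiveFree

/-- Over a projective-free ring, `A ∈ Mₙ(R)` is a non-trivial strongly clean matrix iff
`A` is similar to a block diagonal matrix `diag(T₀, T₁)` where `T₀` and `I - T₁` are
invertible while neither `I - T₀` nor `T₁` is invertible. -/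
theorem nontrivial_stronglyClean_matrix_iff {R : Type} [Ring R]
    (hR : IsProjectiveFree R) (n : ℕ) (A : Matrix (Fin n) (Fin n) R) :
    (IsStronglyClean A ∧ ¬ IsUnit A ∧ ¬ IsUnit (1 - A)) ↔
      ∃ (k l : ℕ) (T₀ : Matrix (Fin k) (Fin k) R) (T₁ : Matrix (Fin l) (Fin l) R)
        (P : Matrix (Fin n) (Fin (k + l)) R) (Q : Matrix (Fin (k + l)) (Fin n) R),
          P * Q = 1 ∧ Q * P = 1 ∧
          A = P * (Matrix.reindex finSumFinEquiv finSumFinEquiv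
                    (Matrix.fromBlocks T₀ 0 0 T₁)) * Q ∧
          IsUnit T₀ ∧ IsUnit (1 - T₁) ∧ ¬ IsUnit (1 - T₀) ∧ ¬ IsUnit T₁ := by
  change IsNontrivialStronglyClean A ↔ _
  constructor
  · intro hA
    obtain ⟨e, u, he, hu, hAeu, heu⟩ := hA.1
    obtain ⟨k, l, P, Q, hPQ, hQP, he⟩ := hR.exists_eq_conj_fromBlocks_zero_one he
    let σ := (reindexRingEquiv R finSumFinEquiv).trans (conjRingEquiv P Q hPQ hQP)
    replace he : e = σ (fromBlocks 0 0 0 1) := he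
    subst he
    have hD : Commute (fromBlocks 0 0 0 1) (σ.symm u) := by
      simpa only [σ.symm_apply_apply] using Commute.map heu σ.symm
    obtain ⟨T₀, T₁, hT, hT₀, hT₁⟩ := exists_fromBlocks_eq_add_of_commute (hu.map σ.symm) hD
    have hAT : A = σ (fromBlocks T₀ 0 0 T₁) := by
      rw [← hT, map_add, σ.apply_symm_apply, hAeu]
    refine ⟨k, l, T₀, T₁, P, Q, hPQ, hQP, hAT, hT₀, hT₁, ?_⟩
    rwa [hAT, σ.isNontrivialStronglyClean_map_iff,
      isNontrivialStronglyClean_fromBlocks_iff hT₀ hT₁] at hA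
  · rintro ⟨k, l, T₀, T₁, P, Q, hPQ, hQP, rfl, hT₀, hT₁, h₀, h₁⟩
    let σ := (reindexRingEquiv R finSumFinEquiv).trans (conjRingEquiv P Q hPQ hQP)
    exact σ.isNontrivialStronglyClean_map_iff.2
      ((isNontrivialStronglyClean_fromBlocks_iff hT₀ hT₁).2 ⟨h₀, h₁⟩)
end

section
/- Let R be a local ring and A ∈ M₂(R). Then either A is invertible, or I - A is invertible, or A is similar to the companion matrix [[0, w₀], [1, 1 + w₁]] for some w₀, w₁ ∈ J(R). -/
/-!
Over a local ring the nonunits form the Jacobson radical `J`. If `A` is scalar modulo `J`, the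
Schur-complement factorisation
`!![a, b; c, d] = !![1, 0; c a⁻¹, 1] * !![a, 0; 0, d - c a⁻¹ b] * !![1, a⁻¹ b; 0, 1]`
shows that `A` or `1 - A` is invertible, according as its diagonal entry or one minus it is a
unit. Otherwise one of `e₀`, `e₁`, `e₀ + e₁` is a cyclic vector `v`: the matrix with columns
`v, A v` is invertible, and in that basis `A` becomes a companion matrix `!![0, w; 1, t]`. This
matrix is invertible when `w` is a unit, and `1` minus it is invertible when `1 - t - w` is a
unit; in the remaining case `w` and `t - 1` both lie in `J`.
-/

namespace IsLocalRing

variable {R : Type*} [Ring R] [IsLocalRing R]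

instance toIsDedekindFiniteMonoid : IsDedekindFiniteMonoid R where
  mul_eq_one_symm {a b} hab := by
    rcases isUnit_or_isUnit_of_add_one (add_sub_cancel (b * a) 1) with h | h
    · -- `b * a` is an idempotent unit
      exact h.mul_left_cancel (by rw [mul_one, mul_assoc, ← mul_assoc a, hab, one_mul])
    · -- `(1 - b * a) * b = 0` with `1 - b * a` a unit
      have hb : b = 0 := h.mul_left_cancel (by
        rw [mul_zero, sub_mul, one_mul, mul_assoc, hab, mul_one, sub_self])
      simp [hb] at hab

theorem isUnit_add_of_not_isUnit {a j : R} (ha : IsUnit a) (hj : ¬IsUnit j) : IsUnit (a + j) := by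
  by_contra h
  exact nonunits_add h ((IsUnit.neg_iff j).not.mpr hj) (by simpa using ha)

end IsLocalRing

namespace Matrix

variable {R : Type*} [Ring R]

theorem isUnit_fin_two_of_isUnit_schur (u : Rˣ) {b c d : R} (hs : IsUnit (d - c * ↑u⁻¹ * b)) :
    IsUnit !![(u : R), b; c, d] := by
  obtain ⟨s, hs⟩ := hs
  have hL : IsUnit !![(1 : R), 0; c * ↑u⁻¹, 1] :=
    ⟨⟨_, !![1, 0; -(c * ↑u⁻¹), 1], by simp [one_fin_two], by simp [one_fin_two]⟩, rfl⟩
  have hD : IsUnit !![(u : R), 0; 0, s] :=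
    ⟨⟨_, !![(↑u⁻¹ : R), 0; 0, ↑s⁻¹], by simp [one_fin_two], by simp [one_fin_two]⟩, rfl⟩
  have hU : IsUnit !![(1 : R), ↑u⁻¹ * b; 0, 1] :=
    ⟨⟨_, !![1, -(↑u⁻¹ * b); 0, 1], by simp [one_fin_two], by simp [one_fin_two]⟩, rfl⟩
  have hLDU : !![(u : R), b; c, d]
      = !![(1 : R), 0; c * ↑u⁻¹, 1] * !![(u : R), 0; 0, s] * !![(1 : R), ↑u⁻¹ * b; 0, 1] := by
    simp [hs, mul_assoc]
  rw [hLDU]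
  exact (hL.mul hD).mul hU

theorem isUnit_fin_two_one_of_isUnit_schur {b c d : R} (hs : IsUnit (d - c * b)) :
    IsUnit !![1, b; c, d] := by
  simpa using isUnit_fin_two_of_isUnit_schur 1 (by simpa using hs)

theorem isUnit_fin_two_of_isUnit_of_not_isUnit [IsLocalRing R] {a b c d : R} (ha : IsUnit a)
    (hb : ¬IsUnit b) (hda : ¬IsUnit (d - a)) : IsUnit !![a, b; c, d] := by
  obtain ⟨u, rfl⟩ := ha
  refine isUnit_fin_two_of_isUnit_schur u ?_
  have hs : d - c * ↑u⁻¹ * b = ↑u + ((d - ↑u) + -(c * ↑u⁻¹ * b)) := by abel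
  rw [hs]
  refine IsLocalRing.isUnit_add_of_not_isUnit u.isUnit (IsLocalRing.nonunits_add hda ?_)
  rw [mem_nonunits_iff, IsUnit.neg_iff]
  exact fun h => hb (isUnit_of_mul_isUnit_right h)

theorem isUnit_or_isUnit_one_sub_of_not_isUnit [IsLocalRing R] {A : Matrix (Fin 2) (Fin 2) R}
    (h01 : ¬IsUnit (A 0 1)) (hd : ¬IsUnit (A 1 1 - A 0 0)) :
    IsUnit A ∨ IsUnit (1 - A) := by
  rcases IsLocalRing.isUnit_or_isUnit_of_add_one (add_sub_cancel (A 0 0) 1) with h | h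
  · left
    rw [A.eta_fin_two]
    exact isUnit_fin_two_of_isUnit_of_not_isUnit h h01 hd
  · right
    have h1A : 1 - A = !![1 - A 0 0, -A 0 1; -A 1 0, 1 - A 1 1] := by
      ext i j; fin_cases i <;> fin_cases j <;> simp
    rw [h1A]
    refine isUnit_fin_two_of_isUnit_of_not_isUnit h ?_ ?_
    · rwa [IsUnit.neg_iff]
    · rwa [sub_sub_sub_cancel_left, ← neg_sub, IsUnit.neg_iff]

theorem isUnit_companion_fin_two {w : R} (hw : IsUnit w) (t : R) : IsUnit !![0, w; 1, t] := by
  obtain ⟨u, rfl⟩ := hw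
  exact ⟨⟨_, !![-(t * ↑u⁻¹), 1; ↑u⁻¹, 0], by simp [one_fin_two], by simp [one_fin_two]⟩, rfl⟩

theorem isUnit_one_sub_companion_fin_two {w t : R} (h : IsUnit (1 - t - w)) :
    IsUnit (1 - !![0, w; 1, t]) := by
  have h1 : 1 - !![0, w; 1, t] = !![1, -w; -1, 1 - t] := by simp [one_fin_two]
  rw [h1]
  exact isUnit_fin_two_one_of_isUnit_schur (by simpa [sub_eq_add_neg] using h)

theorem companion_fin_two_trichotomy [IsLocalRing R] (w t : R) :
    IsUnit !![0, w; 1, t] ∨ IsUnit (1 - !![0, w; 1, t]) ∨ (¬IsUnit w ∧ ¬IsUnit (t - 1)) := by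
  by_cases hw : IsUnit w
  · exact .inl (isUnit_companion_fin_two hw t)
  by_cases htw : IsUnit (1 - t - w)
  · exact .inr (.inl (isUnit_one_sub_companion_fin_two htw))
  refine .inr (.inr ⟨hw, fun ht => htw ?_⟩)
  have hsplit : 1 - t - w = -(t - 1) + -w := by abel
  rw [hsplit]
  exact IsLocalRing.isUnit_add_of_not_isUnit ht.neg ((IsUnit.neg_iff w).not.mpr hw)

def cyclicMatrix (A : Matrix (Fin 2) (Fin 2) R) (v : Fin 2 → R) : Matrix (Fin 2) (Fin 2) R :=
  (of ![v, A *ᵥ v])ᵀ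

theorem exists_isUnit_cyclicMatrix [IsLocalRing R] {A : Matrix (Fin 2) (Fin 2) R}
    (hA : ¬IsUnit A) (h1A : ¬IsUnit (1 - A)) : ∃ v, IsUnit (cyclicMatrix A v) := by
  by_cases h10 : IsUnit (A 1 0)
  · refine ⟨![1, 0], ?_⟩
    have hP : cyclicMatrix A ![1, 0] = !![1, A 0 0; 0, A 1 0] := by
      ext i j; fin_cases i <;> fin_cases j <;> simp [cyclicMatrix]
    rw [hP]
    exact isUnit_fin_two_one_of_isUnit_schur (by simpa using h10)
  by_cases h01 : IsUnit (A 0 1)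
  · refine ⟨![0, 1], ?_⟩
    have hP : cyclicMatrix A ![0, 1] = !![0, A 0 1; 1, A 1 1] := by
      ext i j; fin_cases i <;> fin_cases j <;> simp [cyclicMatrix]
    rw [hP]
    exact isUnit_companion_fin_two h01 _
  by_cases hd : IsUnit (A 1 1 - A 0 0)
  · refine ⟨![1, 1], ?_⟩
    have hP : cyclicMatrix A ![1, 1] = !![1, A 0 0 + A 0 1; 1, A 1 0 + A 1 1] := by
      ext i j; fin_cases i <;> fin_cases j <;> simp [cyclicMatrix]
    rw [hP]
    refine isUnit_fin_two_one_of_isUnit_schur ?_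
    have hs : A 1 0 + A 1 1 - 1 * (A 0 0 + A 0 1) = (A 1 1 - A 0 0) + (A 1 0 + -A 0 1) := by
      rw [one_mul]; abel
    rw [hs]
    refine IsLocalRing.isUnit_add_of_not_isUnit hd (IsLocalRing.nonunits_add h10 ?_)
    rwa [mem_nonunits_iff, IsUnit.neg_iff]
  -- `A` is scalar modulo the nonunits
  exact absurd (isUnit_or_isUnit_one_sub_of_not_isUnit h01 hd) (by tauto)

theorem exists_eq_conj_companion_of_isUnit_cyclicMatrix {A : Matrix (Fin 2) (Fin 2) R}
    {v : Fin 2 → R} (hv : IsUnit (cyclicMatrix A v)) :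
    ∃ (P : (Matrix (Fin 2) (Fin 2) R)ˣ) (w t : R), A = P.val * !![0, w; 1, t] * P⁻¹.val := by
  set P := hv.unit
  set B := P⁻¹.val * A * P.val
  have hcol (j : Fin 2) : P.val *ᵥ Pi.single j 1 = ![v, A *ᵥ v] j := by
    rw [mulVec_single_one]; rfl
  have hB : B *ᵥ Pi.single 0 1 = Pi.single 1 1 := by
    calc B *ᵥ Pi.single 0 1 = P⁻¹.val *ᵥ (A *ᵥ (P.val *ᵥ Pi.single 0 1)) := by
          simp only [B, mulVec_mulVec, mul_assoc]
      _ = P⁻¹.val *ᵥ (P.val *ᵥ Pi.single 1 1) := by rw [hcol, hcol]; rfl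
      _ = Pi.single 1 1 := by rw [mulVec_mulVec, P.inv_mul, one_mulVec]
  have h00 : B 0 0 = 0 := by simpa using congrFun hB 0
  have h10 : B 1 0 = 1 := by simpa using congrFun hB 1
  refine ⟨P, B 0 1, B 1 1, ?_⟩
  calc A = P.val * B * P⁻¹.val := by simp [B, mul_assoc]
    _ = P.val * !![0, B 0 1; 1, B 1 1] * P⁻¹.val := by
      congr 2
      ext i j
      fin_cases i <;> fin_cases j <;> simp [h00, h10]

end Matrix

/-- Over a local ring `R` (where `J(R)` is the set of nonunits), every `A ∈ M₂(R)` is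
invertible, or `I - A` is invertible, or `A` is similar to a companion matrix
`[[0, w₀], [1, 1 + w₁]]` with `w₀, w₁ ∈ J(R)`. -/
theorem matrix_two_trichotomy {R : Type*} [Ring R] [IsLocalRing R]
    (A : Matrix (Fin 2) (Fin 2) R) :
    IsUnit A ∨ IsUnit (1 - A) ∨
      ∃ (w₀ w₁ : R) (P : (Matrix (Fin 2) (Fin 2) R)ˣ),
        ¬ IsUnit w₀ ∧ ¬ IsUnit w₁ ∧
        A = P.val * !![0, w₀; 1, 1 + w₁] * (P⁻¹).val := by
  by_cases hA : IsUnit A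
  · exact .inl hA
  by_cases h1A : IsUnit (1 - A)
  · exact .inr (.inl h1A)
  obtain ⟨v, hv⟩ := Matrix.exists_isUnit_cyclicMatrix hA h1A
  obtain ⟨P, w, t, rfl⟩ := Matrix.exists_eq_conj_companion_of_isUnit_cyclicMatrix hv
  have h1AC : 1 - P.val * !![0, w; 1, t] * P⁻¹.val = P.val * (1 - !![0, w; 1, t]) * P⁻¹.val := by
    simp [mul_sub, sub_mul]
  rcases Matrix.companion_fin_two_trichotomy w t with hC | hC | ⟨hw, ht⟩
  · exact absurd (by simpa using hC) hA
  · exact absurd (by simpa [h1AC] using hC) h1A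
  · exact .inr (.inr ⟨w, t - 1, P, hw, ht, by rw [add_sub_cancel]⟩)
end

section
/- For a local ring R, and W the set of monic degree-2 polynomials f over R with f(0) ∈ J(R) and f(1) ∈ J(R): every f ∈ W has a left root in J(R) if and only if every f ∈ W has a left root in 1 + J(R). -/
/-! The substitution `t ↦ 1 - t` maps `f(t) = t² + at + b` to `t² - (2 + a)t + (1 + a + b)`,
which swaps the values at `0` and `1`, so it preserves `W`; and `μ` is a left root of the
substituted polynomial iff `1 - μ` is a left root of `f`, exchanging roots in `J(R)` with
roots in `1 + J(R)`. -/

section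

variable {R : Type*} [Ring R]

theorem one_sub_sq_add_mul_add (μ a b : R) :
    (1 - μ) ^ 2 + (1 - μ) * a + b = μ ^ 2 + μ * -(2 + a) + (1 + a + b) := by
  noncomm_ring

theorem one_add_neg_two_add_add (a b : R) : 1 + -(2 + a) + (1 + a + b) = b := by
  rw [← one_add_one_eq_two]
  abel

theorem exists_one_sub_root_of_forall_exists_root {P S : R → Prop}
    (H : ∀ a b : R, P b → P (1 + a + b) → ∃ lam : R, S lam ∧ lam ^ 2 + lam * a + b = 0)
    (a b : R) (hb : P b) (hab : P (1 + a + b)) :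
    ∃ lam : R, S (1 - lam) ∧ lam ^ 2 + lam * a + b = 0 := by
  obtain ⟨μ, hμ, hroot⟩ := H (-(2 + a)) (1 + a + b) hab (by rwa [one_add_neg_two_add_add])
  exact ⟨1 - μ, by rwa [sub_sub_cancel], by rw [one_sub_sq_add_mul_add, hroot]⟩

end

theorem left_root_in_jacobson_iff_in_one_add_jacobson_general {R : Type*} [Ring R] :
    (∀ a b : R, ¬ IsUnit b → ¬ IsUnit (1 + a + b) →
        ∃ lam : R, ¬ IsUnit lam ∧ lam ^ 2 + lam * a + b = 0) ↔
      (∀ a b : R, ¬ IsUnit b → ¬ IsUnit (1 + a + b) →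
        ∃ lam : R, ¬ IsUnit (lam - 1) ∧ lam ^ 2 + lam * a + b = 0) := by
  constructor
  · intro H a b hb hab
    obtain ⟨lam, hlam, hroot⟩ := exists_one_sub_root_of_forall_exists_root H a b hb hab
    exact ⟨lam, by rwa [← neg_sub, IsUnit.neg_iff], hroot⟩
  · intro H a b hb hab
    obtain ⟨lam, hlam, hroot⟩ := exists_one_sub_root_of_forall_exists_root H a b hb hab
    exact ⟨lam, by rwa [sub_sub_cancel_left, IsUnit.neg_iff] at hlam, hroot⟩

/-- For a local ring `R` (where `J(R)` is the set of nonunits), with `W` the set of monic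
quadratics `f(t) = t² + at + b` such that `f(0), f(1) ∈ J(R)`: every `f ∈ W` has a left
root in `J(R)` iff every `f ∈ W` has a left root in `1 + J(R)`. -/
theorem left_root_in_jacobson_iff_in_one_add_jacobson {R : Type*} [Ring R]
    [IsLocalRing R] :
    (∀ a b : R, ¬ IsUnit b → ¬ IsUnit (1 + a + b) →
        ∃ lam : R, ¬ IsUnit lam ∧ lam ^ 2 + lam * a + b = 0) ↔
      (∀ a b : R, ¬ IsUnit b → ¬ IsUnit (1 + a + b) →
        ∃ lam : R, ¬ IsUnit (lam - 1) ∧ lam ^ 2 + lam * a + b = 0) :=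
  left_root_in_jacobson_iff_in_one_add_jacobson_general
end

section
/- For a local ring R, M₂(R) is strongly clean if and only if every monic quadratic polynomial f over R admits factorizations f = g₀g₁ = h₁h₀ into monic polynomials with g₀(0), g₁(1), h₀(0), h₁(1) all units of R. -/
/-!
Both conditions are statements about companion matrices. Over a local ring, if neither `A` nor
`A - 1` is a unit then one of `e₀`, `e₁`, `e₀ + e₁` is a cyclic vector of `A`, so `A` is similar
to the companion matrix `C` of some `f = X ^ 2 + a X + b` in which neither `f(0) = b` nor
`f(1) = 1 + a + b` is a unit. Such a `C` is strongly clean iff it is similar to `diag(α, β)` with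
`α` a non-unit and `β` a unit: the idempotent of a decomposition is similar to `diag(1, 0)`, and
the unit commutes with it. Eigenvectors of `C` for `α` and `β` give right roots `s` and `p` of `f`
with `s` a non-unit and `p` a unit, and conversely two such roots diagonalize `C`. Finally a right
root `s` gives `f = (X + a + s)(X - s)`, and the unit conditions at `0` and `1` on `f = g₀ g₁`
(resp. `f = h₁ h₀`) say exactly that the root `-g₁(0)` is a non-unit (resp. `-h₀(0)` is a unit).
-/

open Polynomial Matrix

namespace IsLocalRing

variable {R : Type*} [Ring R] [IsLocalRing R]

theorem eq_zero_or_eq_one_of_isIdempotentElem {e : R} (he : IsIdempotentElem e) :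
    e = 0 ∨ e = 1 := by
  rcases isUnit_or_isUnit_of_add_one (add_sub_cancel e 1) with h | h
  · exact .inr ((IsIdempotentElem.iff_eq_one_of_isUnit h).mp he)
  · exact .inl (sub_eq_self.mp ((IsIdempotentElem.iff_eq_one_of_isUnit h).mp he.one_sub))

instance : IsDedekindFiniteMonoid R where
  mul_eq_one_symm {x y} hxy := by
    have hyx : IsIdempotentElem (y * x) := by
      rw [IsIdempotentElem, mul_assoc, ← mul_assoc x, hxy, one_mul]
    refine (eq_zero_or_eq_one_of_isIdempotentElem hyx).resolve_left fun h =>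
      one_ne_zero (α := R) ?_
    calc (1 : R) = x * y * (x * y) := by rw [hxy, one_mul]
      _ = x * (y * x) * y := by noncomm_ring
      _ = 0 := by rw [h, mul_zero, zero_mul]

theorem isUnit_add_iff_of_not_isUnit {a : R} (ha : ¬IsUnit a) {u : R} :
    IsUnit (u + a) ↔ IsUnit u := by
  have key : ∀ {x y : R}, IsUnit x → ¬IsUnit y → IsUnit (x + y) := fun {x y} hx hy =>
    (isUnit_or_isUnit_of_isUnit_add (b := -y) (by rwa [add_neg_cancel_right])).resolve_right
      (by rwa [IsUnit.neg_iff])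
  refine ⟨fun h => ?_, fun h => key h ha⟩
  simpa using key h (y := -a) (by rwa [IsUnit.neg_iff])

theorem isUnit_sub_iff_of_not_isUnit {a : R} (ha : ¬IsUnit a) {u : R} :
    IsUnit (u - a) ↔ IsUnit u := by
  rw [sub_eq_add_neg, isUnit_add_iff_of_not_isUnit (by rwa [IsUnit.neg_iff])]

theorem isUnit_sub_of_not_isUnit_and {x y : R} (h₀ : ¬(IsUnit x ∧ IsUnit y))
    (h₁ : ¬(IsUnit (x - 1) ∧ IsUnit (y - 1))) : IsUnit (y - x) := by
  by_cases hx : IsUnit x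
  · rw [← neg_sub, IsUnit.neg_iff]
    exact (isUnit_sub_iff_of_not_isUnit fun hy => h₀ ⟨hx, hy⟩).mpr hx
  · have hx1 : IsUnit (x - 1) := by
      rw [← neg_sub, IsUnit.neg_iff]
      exact (isUnit_sub_iff_of_not_isUnit hx).mpr isUnit_one
    have hy : IsUnit y := by
      have := (isUnit_add_iff_of_not_isUnit (fun hy1 => h₁ ⟨hx1, hy1⟩) (u := 1)).mpr isUnit_one
      simpa using this
    exact (isUnit_sub_iff_of_not_isUnit hx).mpr hy

end IsLocalRing

section Conj

variable {M : Type*} [Monoid M]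

theorem Units.conj_mul_conj (c : Mˣ) (a b : M) :
    c * a * ↑c⁻¹ * (c * b * ↑c⁻¹) = c * (a * b) * ↑c⁻¹ := by
  simp [mul_assoc]

theorem isConj_iff_exists_units {a b : M} : IsConj a b ↔ ∃ c : Mˣ, c * a * ↑c⁻¹ = b :=
  exists_congr fun c => (Units.mul_inv_eq_iff_eq_mul c).symm

theorem IsConj.isUnit_iff {a b : M} (h : IsConj a b) : IsUnit a ↔ IsUnit b := by
  obtain ⟨c, rfl⟩ := isConj_iff_exists_units.mp h
  simp

theorem IsConj.isIdempotentElem {a b : M} (h : IsConj a b) (ha : IsIdempotentElem a) :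
    IsIdempotentElem b := by
  obtain ⟨c, rfl⟩ := isConj_iff_exists_units.mp h
  rw [IsIdempotentElem, Units.conj_mul_conj, ha.eq]

end Conj

section StronglyClean

variable {S : Type*} [Ring S]

theorem isStronglyClean_of_isUnit {a : S} (h : IsUnit a) : IsStronglyClean a :=
  ⟨0, a, .zero, h, (zero_add a).symm, by simp⟩

theorem isStronglyClean_of_isUnit_sub_one {a : S} (h : IsUnit (a - 1)) : IsStronglyClean a :=
  ⟨1, a - 1, .one, h, (add_sub_cancel 1 a).symm, by simp⟩

theorem IsConj.sub_one {a b : S} (h : IsConj a b) : IsConj (a - 1) (b - 1) :=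
  let ⟨c, hc⟩ := h
  ⟨c, hc.sub_right (.one_right _)⟩

theorem IsConj.isStronglyClean {a b : S} (h : IsConj a b) (ha : IsStronglyClean a) :
    IsStronglyClean b := by
  obtain ⟨c, rfl⟩ := isConj_iff_exists_units.mp h
  obtain ⟨e, u, he, hu, rfl, heu⟩ := ha
  refine ⟨c * e * ↑c⁻¹, c * u * ↑c⁻¹, ?_, by simpa using hu, by rw [mul_add, add_mul], ?_⟩
  · rw [IsIdempotentElem, Units.conj_mul_conj, he.eq]
  · rw [Units.conj_mul_conj, Units.conj_mul_conj, heu]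

end StronglyClean

section TwoByTwo

variable {R : Type*} [Ring R]

theorem isUnit_lowerUnitriangular (c : R) : IsUnit !![1, 0; c, 1] :=
  ⟨⟨!![1, 0; c, 1], !![1, 0; -c, 1], by simp [one_fin_two], by simp [one_fin_two]⟩, rfl⟩

theorem isUnit_upperTriangular {a d : R} (ha : IsUnit a) (hd : IsUnit d) (b : R) :
    IsUnit !![a, b; 0, d] := by
  obtain ⟨u, rfl⟩ := ha
  obtain ⟨v, rfl⟩ := hd
  refine ⟨⟨_, !![(↑u⁻¹ : R), -(↑u⁻¹ * b * ↑v⁻¹); 0, ↑v⁻¹], ?_, ?_⟩, rfl⟩ <;>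
    simp [one_fin_two, ← mul_assoc]

theorem isUnit_swap_fin_two : IsUnit (!![0, 1; 1, 0] : Matrix (Fin 2) (Fin 2) R) :=
  ⟨⟨!![0, 1; 1, 0], !![0, 1; 1, 0], by simp [one_fin_two], by simp [one_fin_two]⟩, rfl⟩

variable [IsLocalRing R]

theorem isUnit_apply_zero_or_isUnit_apply_one {Q : Matrix (Fin 2) (Fin 2) R} (hQ : IsUnit Q)
    (j : Fin 2) : IsUnit (Q 0 j) ∨ IsUnit (Q 1 j) := by
  obtain ⟨N, hN⟩ := hQ.exists_left_inv
  have hjj : N j 0 * Q 0 j + N j 1 * Q 1 j = 1 := by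
    simpa [mul_apply, Fin.sum_univ_two] using congr_fun₂ hN j j
  exact (IsLocalRing.isUnit_or_isUnit_of_add_one hjj).imp
    isUnit_of_mul_isUnit_right isUnit_of_mul_isUnit_right

theorem isUnit_upperTriangular_iff (u : Rˣ) {b d : R} :
    IsUnit !![(u : R), b; 0, d] ↔ IsUnit d := by
  refine ⟨fun h => ?_, fun ⟨v, hv⟩ => hv ▸ isUnit_upperTriangular u.isUnit v.isUnit b⟩
  obtain ⟨N, hN⟩ := h.exists_right_inv
  have h11 : d * N 1 1 = 1 := by
    simpa [mul_apply, Fin.sum_univ_two] using congr_fun₂ hN 1 1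
  exact .of_mul_eq_one _ h11

theorem isUnit_fin_two_iff_schur (u : Rˣ) {b c d : R} :
    IsUnit !![(u : R), b; c, d] ↔ IsUnit (d - c * ↑u⁻¹ * b) := by
  have hfac : !![(u : R), b; c, d] =
      !![1, 0; c * ↑u⁻¹, 1] * !![(u : R), b; 0, d - c * ↑u⁻¹ * b] := by
    simp [mul_assoc]
  rw [hfac, (isUnit_lowerUnitriangular _).mul_left_iff, isUnit_upperTriangular_iff]

theorem isUnit_fin_two_iff_of_not_isUnit {a b c d : R} (hb : ¬IsUnit b) (hc : ¬IsUnit c) :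
    IsUnit !![a, b; c, d] ↔ IsUnit a ∧ IsUnit d := by
  have hd : ∀ u : Rˣ, IsUnit (d - c * ↑u⁻¹ * b) ↔ IsUnit d := fun u =>
    IsLocalRing.isUnit_sub_iff_of_not_isUnit fun h => hb (isUnit_of_mul_isUnit_right h)
  constructor
  · intro h
    obtain ⟨u, rfl⟩ :=
      (isUnit_apply_zero_or_isUnit_apply_one h 0).resolve_right (by simpa using hc)
    exact ⟨u.isUnit, (hd u).mp ((isUnit_fin_two_iff_schur u).mp h)⟩
  · rintro ⟨⟨u, rfl⟩, hd'⟩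
    exact (isUnit_fin_two_iff_schur u).mpr ((hd u).mpr hd')

theorem isUnit_fin_two_zero_one_iff {b d : R} : IsUnit !![0, b; 1, d] ↔ IsUnit b := by
  have hfac : !![0, b; 1, d] = !![0, 1; 1, 0] * !![((1 : Rˣ) : R), d; 0, b] := by simp
  rw [hfac, isUnit_swap_fin_two.mul_left_iff, isUnit_upperTriangular_iff]

end TwoByTwo

section Companion

variable {R : Type*} [Ring R]

/-- The companion matrix of `X ^ 2 + C a * X + C b`. -/
def companion (a b : R) : Matrix (Fin 2) (Fin 2) R := !![0, -b; 1, -a]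

theorem exists_isConj_companion_of_isUnit (A : Matrix (Fin 2) (Fin 2) R) (v : Fin 2 → R)
    (hv : IsUnit !![v 0, (A *ᵥ v) 0; v 1, (A *ᵥ v) 1]) : ∃ a b, IsConj A (companion a b) := by
  obtain ⟨P, hP⟩ := hv
  have hAP : ∀ i, (A * P) i 0 = (P : Matrix (Fin 2) (Fin 2) R) i 1 := by
    intro i
    fin_cases i <;> simp [hP, mul_apply, mulVec, dotProduct, Fin.sum_univ_two]
  set M : Matrix (Fin 2) (Fin 2) R := (↑P⁻¹ : Matrix (Fin 2) (Fin 2) R) * A * P with hMdef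
  have hM : ∀ i, M i 0 = (1 : Matrix (Fin 2) (Fin 2) R) i 1 := by
    intro i
    rw [hMdef, Matrix.mul_assoc, mul_apply]
    simp only [hAP]
    rw [← mul_apply, P.inv_mul]
  refine ⟨-M 1 1, -M 0 1, isConj_iff_exists_units.mpr ⟨P⁻¹, ?_⟩⟩
  rw [inv_inv, ← hMdef, eta_fin_two M, hM 0, hM 1]
  simp [companion]

variable [IsLocalRing R]

theorem isUnit_companion_iff {a b : R} : IsUnit (companion a b) ↔ IsUnit b := by
  rw [companion, isUnit_fin_two_zero_one_iff, IsUnit.neg_iff]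

theorem isUnit_companion_sub_one_iff {a b : R} :
    IsUnit (companion a b - 1) ↔ IsUnit (1 + a + b) := by
  have h : companion a b - 1 = !![((-1 : Rˣ) : R), -b; 1, -a - 1] := by
    ext i j
    fin_cases i <;> fin_cases j <;> simp [companion]
  rw [h, isUnit_fin_two_iff_schur, ← IsUnit.neg_iff]
  congr! 1
  simp
  abel

theorem exists_isConj_companion {A : Matrix (Fin 2) (Fin 2) R} (hA : ¬IsUnit A)
    (hA1 : ¬IsUnit (A - 1)) : ∃ a b, IsConj A (companion a b) := by
  obtain ⟨p, q, r, t, rfl⟩ : ∃ p q r t, A = !![p, q; r, t] := ⟨_, _, _, _, eta_fin_two A⟩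
  by_cases hr : IsUnit r
  · refine exists_isConj_companion_of_isUnit _ ![1, 0] ?_
    simpa using isUnit_upperTriangular isUnit_one hr p
  by_cases hq : IsUnit q
  · refine exists_isConj_companion_of_isUnit _ ![0, 1] ?_
    simpa [isUnit_fin_two_zero_one_iff] using hq
  -- Now `p` and `t` reduce to `0` and `1` (in some order) modulo the maximal ideal.
  refine exists_isConj_companion_of_isUnit _ ![1, 1] ?_
  have hA1' : !![p, q; r, t] - 1 = !![p - 1, q; r, t - 1] := by
    ext i j
    fin_cases i <;> fin_cases j <;> simp
  rw [isUnit_fin_two_iff_of_not_isUnit hq hr] at hA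
  rw [hA1', isUnit_fin_two_iff_of_not_isUnit hq hr] at hA1
  have hqr : ¬IsUnit (r - q) := (IsLocalRing.isUnit_sub_iff_of_not_isUnit hq).not.mpr hr
  have hschur : IsUnit (r + t - 1 * ↑(1 : Rˣ)⁻¹ * (p + q)) := by
    rw [show r + t - 1 * ↑(1 : Rˣ)⁻¹ * (p + q) = t - p + (r - q) by simp; abel,
      IsLocalRing.isUnit_add_iff_of_not_isUnit hqr]
    exact IsLocalRing.isUnit_sub_of_not_isUnit_and hA hA1
  simpa using (isUnit_fin_two_iff_schur 1).mpr hschur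

end Companion

section Diagonalization

variable {R : Type*} [Ring R] [IsLocalRing R]

theorem isConj_diag_one_zero_of_isIdempotentElem {E : Matrix (Fin 2) (Fin 2) R}
    (hE : IsIdempotentElem E) (hE0 : E ≠ 0) (hE1 : E ≠ 1) : IsConj E !![1, 0; 0, 0] := by
  have hEu : ¬IsUnit E := fun h => hE1 ((IsIdempotentElem.iff_eq_one_of_isUnit h).mp hE)
  have hE1u : ¬IsUnit (E - 1) := fun h =>
    hE0 (h.neg.mul_left_eq_zero.mp (by rw [neg_sub, hE.mul_one_sub_self]))
  obtain ⟨a, b, hC⟩ := exists_isConj_companion hEu hE1u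
  have hCC := (hC.isIdempotentElem hE).eq
  have hb : b = 0 := by simpa [companion] using congr_fun₂ hCC 0 0
  have ha : a = -1 := by
    have := congr_fun₂ hCC 1 0
    simp [companion] at this
    exact neg_eq_iff_eq_neg.mp this
  subst ha hb
  -- `(0, 1)` and `(1, -1)` are eigenvectors of `!![0, 0; 1, 1]` for `1` and `0`.
  refine hC.trans ⟨⟨!![1, 1; 1, 0], !![0, 1; 1, -1], ?_, ?_⟩, ?_⟩ <;>
    simp [companion, SemiconjBy, one_fin_two]

omit [IsLocalRing R] in
theorem offDiag_eq_zero_of_commute {M : Matrix (Fin 2) (Fin 2) R}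
    (h : Commute !![1, 0; 0, 0] M) : M 0 1 = 0 ∧ M 1 0 = 0 := by
  have h01 := congr_fun₂ h.eq 0 1
  have h10 := congr_fun₂ h.eq 1 0
  simp [mul_apply, Fin.sum_univ_two] at h01 h10
  exact ⟨h01, h10.symm⟩

theorem exists_isConj_diag_of_isStronglyClean {B : Matrix (Fin 2) (Fin 2) R}
    (hB : IsStronglyClean B) (hBu : ¬IsUnit B) (hB1 : ¬IsUnit (B - 1)) :
    ∃ α β : R, ¬IsUnit α ∧ IsUnit β ∧ IsConj B !![α, 0; 0, β] := by
  obtain ⟨E, U, hE, hU, rfl, hEU⟩ := hB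
  have hE0 : E ≠ 0 := by rintro rfl; simp_all
  have hE1 : E ≠ 1 := by rintro rfl; simp_all
  obtain ⟨c, hc⟩ :=
    isConj_iff_exists_units.mp (isConj_diag_one_zero_of_isIdempotentElem hE hE0 hE1)
  set U' : Matrix (Fin 2) (Fin 2) R := c * U * (↑c⁻¹ : Matrix (Fin 2) (Fin 2) R) with hU'
  have hU'u : IsUnit U' := by simpa [hU'] using hU
  obtain ⟨h01, h10⟩ : U' 0 1 = 0 ∧ U' 1 0 = 0 := by
    refine offDiag_eq_zero_of_commute ?_
    rw [Commute, SemiconjBy, ← hc, hU', Units.conj_mul_conj, Units.conj_mul_conj, hEU]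
  have hconj : IsConj (E + U) !![1 + U' 0 0, 0; 0, U' 1 1] := by
    refine isConj_iff_exists_units.mpr ⟨c, ?_⟩
    rw [mul_add, add_mul, hc, ← hU']
    ext i j
    fin_cases i <;> fin_cases j <;> simp [h01, h10]
  have hu : IsUnit (U' 0 0) ∧ IsUnit (U' 1 1) := by
    rwa [eta_fin_two U', h01, h10,
      isUnit_fin_two_iff_of_not_isUnit not_isUnit_zero not_isUnit_zero] at hU'u
  refine ⟨1 + U' 0 0, U' 1 1, fun h => hBu ?_, hu.2, hconj⟩
  rw [hconj.isUnit_iff, isUnit_fin_two_iff_of_not_isUnit not_isUnit_zero not_isUnit_zero]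
  exact ⟨h, hu.2⟩

end Diagonalization

section Roots

variable {R : Type*} [Ring R] [IsLocalRing R]

theorem exists_root_of_companion_eigenvector {a b q₀ q₁ μ : R} (h₀ : -(b * q₁) = q₀ * μ)
    (h₁ : q₀ + -(a * q₁) = q₁ * μ) (hq : IsUnit q₀ ∨ IsUnit q₁) :
    ∃ s, s ^ 2 + a * s + b = 0 ∧ (IsUnit s ↔ IsUnit μ) := by
  have hq₀ : q₀ = q₁ * μ + a * q₁ := by rw [← h₁]; abel
  have hq₁ : IsUnit q₁ := by
    by_contra hq₁
    refine hq.elim (fun hq₀' => hq₁ ?_) hq₁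
    rw [hq₀, IsLocalRing.isUnit_add_iff_of_not_isUnit
      fun h => hq₁ (isUnit_of_mul_isUnit_right h)] at hq₀'
    exact isUnit_of_mul_isUnit_left hq₀'
  obtain ⟨u, rfl⟩ := hq₁
  set s := u * μ * ↑u⁻¹
  have hsu : s * u = u * μ := by simp [s]
  refine ⟨s, u.mul_left_eq_zero.mp ?_, by simp [s]⟩
  have hssu : s * s * u = u * μ * μ := by rw [mul_assoc, hsu, ← mul_assoc, hsu]
  have hasu : a * s * u = a * u * μ := by rw [mul_assoc, hsu, ← mul_assoc]
  calc (s ^ 2 + a * s + b) * u = s * s * u + a * s * u + b * u := by noncomm_ring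
    _ = (u * μ + a * u) * μ + b * u := by rw [hssu, hasu]; noncomm_ring
    _ = 0 := by rw [← hq₀, ← h₀]; abel

theorem exists_roots_of_isStronglyClean_companion {a b : R}
    (h : IsStronglyClean (companion a b)) (hb : ¬IsUnit b) (hab : ¬IsUnit (1 + a + b)) :
    ∃ s p : R, ¬IsUnit s ∧ s ^ 2 + a * s + b = 0 ∧ IsUnit p ∧ p ^ 2 + a * p + b = 0 := by
  obtain ⟨α, β, hα, hβ, hconj⟩ := exists_isConj_diag_of_isStronglyClean h
    (isUnit_companion_iff.not.mpr hb) (isUnit_companion_sub_one_iff.not.mpr hab)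
  obtain ⟨c, hc⟩ := isConj_iff_exists_units.mp hconj
  set Q : Matrix (Fin 2) (Fin 2) R := ↑c⁻¹
  have hQ : companion a b * Q = Q * !![α, 0; 0, β] := by
    rw [← hc]
    simp [Q, mul_assoc]
  have e00 := congr_fun₂ hQ 0 0
  have e10 := congr_fun₂ hQ 1 0
  have e01 := congr_fun₂ hQ 0 1
  have e11 := congr_fun₂ hQ 1 1
  simp [companion, mul_apply, Fin.sum_univ_two] at e00 e10 e01 e11
  obtain ⟨s, hs, hsα⟩ := exists_root_of_companion_eigenvector e00 e10
    (isUnit_apply_zero_or_isUnit_apply_one c⁻¹.isUnit 0)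
  obtain ⟨p, hp, hpβ⟩ := exists_root_of_companion_eigenvector e01 e11
    (isUnit_apply_zero_or_isUnit_apply_one c⁻¹.isUnit 1)
  exact ⟨s, p, hsα.not.mpr hα, hs, hpβ.mpr hβ, hp⟩

theorem isStronglyClean_diag {s p : R} (hs : ¬IsUnit s) (hp : IsUnit p) :
    IsStronglyClean !![s, 0; 0, p] := by
  refine ⟨!![1, 0; 0, 0], !![s - 1, 0; 0, p], ?_, ?_, ?_, ?_⟩
  · rw [isIdempotentElem_iff]
    ext i j
    fin_cases i <;> fin_cases j <;> simp
  · rw [isUnit_fin_two_iff_of_not_isUnit not_isUnit_zero not_isUnit_zero, ← neg_sub,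
      IsUnit.neg_iff, IsLocalRing.isUnit_sub_iff_of_not_isUnit hs]
    exact ⟨isUnit_one, hp⟩
  · ext i j
    fin_cases i <;> fin_cases j <;> simp
  · ext i j
    fin_cases i <;> fin_cases j <;> simp

theorem isStronglyClean_companion_of_roots {a b s p : R} (hs : ¬IsUnit s)
    (hsr : s ^ 2 + a * s + b = 0) (hp : IsUnit p) (hpr : p ^ 2 + a * p + b = 0) :
    IsStronglyClean (companion a b) := by
  -- The columns are eigenvectors of `companion a b` for `s` and `p`.
  have hT : IsUnit !![s + a, p + a; 1, 1] := by
    have hfac : !![s + a, p + a; 1, 1] = !![s - p, p + a; 0, 1] * !![1, 0; 1, 1] := by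
      simp; abel
    have hsp : IsUnit (s - p) := by
      rw [← neg_sub, IsUnit.neg_iff]
      exact (IsLocalRing.isUnit_sub_iff_of_not_isUnit hs).mpr hp
    rw [hfac]
    exact (isUnit_upperTriangular hsp isUnit_one _).mul (isUnit_lowerUnitriangular 1)
  have hs' : (s + a) * s = -b := eq_neg_of_add_eq_zero_left (by rw [add_mul, ← pow_two, hsr])
  have hp' : (p + a) * p = -b := eq_neg_of_add_eq_zero_left (by rw [add_mul, ← pow_two, hpr])
  refine IsConj.isStronglyClean ⟨hT.unit, ?_⟩ (isStronglyClean_diag hs hp)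
  simp [SemiconjBy, companion, hs', hp']

end Roots

section Quadratic

variable {R : Type*} [Ring R]

theorem Polynomial.Monic.eq_X_sq_add_C_mul_X_add_C {f : R[X]} (hm : f.Monic)
    (hd : f.natDegree = 2) : f = X ^ 2 + C (f.coeff 1) * X + C (f.coeff 0) := by
  conv_lhs => rw [hm.as_sum, hd]
  simp [Finset.sum_range_succ]
  abel

theorem X_add_C_mul_X_add_C (c d : R) :
    (X + C c) * (X + C d) = X ^ 2 + C (c + d) * X + C (c * d) := by
  simp only [C_add, C_mul, add_mul, mul_add, ← X_mul_C, pow_two]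
  abel

theorem X_sq_add_C_mul_X_add_C_inj {a b a' b' : R} :
    X ^ 2 + C a * X + C b = X ^ 2 + C a' * X + C b' ↔ a = a' ∧ b = b' := by
  refine ⟨fun h => ⟨?_, ?_⟩, fun ⟨ha, hb⟩ => ha ▸ hb ▸ rfl⟩
  · simpa using congrArg (coeff · 1) h
  · simpa using congrArg (coeff · 0) h

theorem X_sq_add_C_mul_X_add_C_eq_mul {a b s : R} (hs : s ^ 2 + a * s + b = 0) :
    X ^ 2 + C a * X + C b = (X + C (a + s)) * (X + C (-s)) := by
  rw [X_add_C_mul_X_add_C, X_sq_add_C_mul_X_add_C_inj, eq_neg_of_add_eq_zero_right hs]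
  exact ⟨by abel, by noncomm_ring⟩

theorem monic_X_sq_add_C_mul_X_add_C [Nontrivial R] (a b : R) :
    (X ^ 2 + C a * X + C b).Monic := by
  rw [Monic]
  simpa using leadingCoeff_quadratic (R := R) (b := a) (c := b) one_ne_zero

theorem natDegree_X_sq_add_C_mul_X_add_C [Nontrivial R] (a b : R) :
    (X ^ 2 + C a * X + C b).natDegree = 2 := by
  simpa using natDegree_quadratic (R := R) (b := a) (c := b) one_ne_zero

theorem Polynomial.Monic.eq_X_add_C_of_mul_eq_quadratic [Nontrivial R] {g h : R[X]}
    (hg : g.Monic) (hh : h.Monic) (hgh : (g * h).natDegree = 2) (hg1 : g ≠ 1) (hh1 : h ≠ 1) :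
    g = X + C (g.coeff 0) ∧ h = X + C (h.coeff 0) := by
  rw [hg.natDegree_mul hh] at hgh
  have := hg.natDegree_eq_zero.not.mpr hg1
  have := hh.natDegree_eq_zero.not.mpr hh1
  exact ⟨hg.eq_X_add_C (by omega), hh.eq_X_add_C (by omega)⟩

end Quadratic

section Factorization

variable {R : Type*} [Ring R] [IsLocalRing R] {a b : R}

theorem exists_factorization_zero_one_iff (hb : ¬IsUnit b) (hab : ¬IsUnit (1 + a + b)) :
    (∃ g₀ g₁ : R[X], g₀.Monic ∧ g₁.Monic ∧ X ^ 2 + C a * X + C b = g₀ * g₁ ∧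
        IsUnit (g₀.eval 0) ∧ IsUnit (g₁.eval 1)) ↔
      ∃ s, ¬IsUnit s ∧ s ^ 2 + a * s + b = 0 := by
  constructor
  · rintro ⟨g₀, g₁, hg₀, hg₁, hf, h₀, h₁⟩
    have hg₀1 : g₀ ≠ 1 := by
      rintro rfl
      rw [one_mul] at hf
      subst hf
      exact hab (by simpa [eval_X_pow] using h₁)
    have hg₁1 : g₁ ≠ 1 := by
      rintro rfl
      rw [mul_one] at hf
      subst hf
      exact hb (by simpa [eval_X_pow] using h₀)
    obtain ⟨e₀, e₁⟩ := hg₀.eq_X_add_C_of_mul_eq_quadratic hg₁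
      (hf ▸ natDegree_X_sq_add_C_mul_X_add_C a b) hg₀1 hg₁1
    rw [e₀, e₁, X_add_C_mul_X_add_C, X_sq_add_C_mul_X_add_C_inj] at hf
    rw [e₀] at h₀
    simp only [eval_add, eval_X, eval_C, zero_add] at h₀
    refine ⟨-g₁.coeff 0, fun hs => hb ?_, ?_⟩
    · rw [hf.2]
      exact h₀.mul (by simpa using hs)
    · rw [hf.1, hf.2]
      noncomm_ring
  · rintro ⟨s, hs, hsr⟩
    have has : ¬IsUnit (1 + a + s) := by
      have := IsLocalRing.nonunits_add hab
        ((IsLocalRing.isUnit_sub_iff_of_not_isUnit hb).not.mpr hs)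
      rwa [show 1 + a + b + (s - b) = 1 + a + s by abel] at this
    refine ⟨X + C (a + s), X + C (-s), monic_X_add_C _, monic_X_add_C _,
      X_sq_add_C_mul_X_add_C_eq_mul hsr, ?_, ?_⟩
    · have := (IsLocalRing.isUnit_sub_iff_of_not_isUnit has).mpr isUnit_one
      rw [← IsUnit.neg_iff, show -(1 - (1 + a + s)) = a + s by abel] at this
      simpa using this
    · simpa [← sub_eq_add_neg] using
        (IsLocalRing.isUnit_sub_iff_of_not_isUnit hs).mpr isUnit_one

theorem exists_factorization_one_zero_iff (hb : ¬IsUnit b) (hab : ¬IsUnit (1 + a + b)) :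
    (∃ h₀ h₁ : R[X], h₀.Monic ∧ h₁.Monic ∧ X ^ 2 + C a * X + C b = h₁ * h₀ ∧
        IsUnit (h₀.eval 0) ∧ IsUnit (h₁.eval 1)) ↔
      ∃ p, IsUnit p ∧ p ^ 2 + a * p + b = 0 := by
  constructor
  · rintro ⟨h₀, h₁, hh₀, hh₁, hf, h₀0, h₁1⟩
    have hh₀1 : h₀ ≠ 1 := by
      rintro rfl
      rw [mul_one] at hf
      subst hf
      exact hab (by simpa [eval_X_pow] using h₁1)
    have hh₁1 : h₁ ≠ 1 := by
      rintro rfl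
      rw [one_mul] at hf
      subst hf
      exact hb (by simpa [eval_X_pow] using h₀0)
    obtain ⟨e₁, e₀⟩ := hh₁.eq_X_add_C_of_mul_eq_quadratic hh₀
      (hf ▸ natDegree_X_sq_add_C_mul_X_add_C a b) hh₁1 hh₀1
    rw [e₀, e₁, X_add_C_mul_X_add_C, X_sq_add_C_mul_X_add_C_inj] at hf
    rw [e₀] at h₀0
    simp only [eval_add, eval_X, eval_C, zero_add] at h₀0
    refine ⟨-h₀.coeff 0, h₀0.neg, ?_⟩
    rw [hf.1, hf.2]
    noncomm_ring
  · rintro ⟨p, hp, hpr⟩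
    have hap : ¬IsUnit (a + p) := fun h => hb <| by
      have hpb : (a + p) * p = -b := eq_neg_of_add_eq_zero_left (by rw [← hpr]; noncomm_ring)
      simpa [hpb] using h.mul hp
    refine ⟨X + C (-p), X + C (a + p), monic_X_add_C _, monic_X_add_C _,
      X_sq_add_C_mul_X_add_C_eq_mul hpr, by simpa using hp, ?_⟩
    simpa [add_assoc] using (IsLocalRing.isUnit_add_iff_of_not_isUnit hap).mpr isUnit_one

end Factorization

theorem isStronglyClean_companion_iff {R : Type*} [Ring R] [IsLocalRing R] {a b : R}
    (hb : ¬IsUnit b) (hab : ¬IsUnit (1 + a + b)) :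
    IsStronglyClean (companion a b) ↔
      ∃ g₀ g₁ h₀ h₁ : R[X], g₀.Monic ∧ g₁.Monic ∧ h₀.Monic ∧ h₁.Monic ∧
        X ^ 2 + C a * X + C b = g₀ * g₁ ∧ X ^ 2 + C a * X + C b = h₁ * h₀ ∧
        IsUnit (g₀.eval 0) ∧ IsUnit (g₁.eval 1) ∧ IsUnit (h₀.eval 0) ∧ IsUnit (h₁.eval 1) := by
  constructor
  · intro h
    obtain ⟨s, p, hs, hsr, hp, hpr⟩ := exists_roots_of_isStronglyClean_companion h hb hab
    obtain ⟨g₀, g₁, hg₀, hg₁, hg, hg₀0, hg₁1⟩ :=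
      (exists_factorization_zero_one_iff hb hab).mpr ⟨s, hs, hsr⟩
    obtain ⟨h₀, h₁, hh₀, hh₁, hh, hh₀0, hh₁1⟩ :=
      (exists_factorization_one_zero_iff hb hab).mpr ⟨p, hp, hpr⟩
    exact ⟨g₀, g₁, h₀, h₁, hg₀, hg₁, hh₀, hh₁, hg, hh, hg₀0, hg₁1, hh₀0, hh₁1⟩
  · rintro ⟨g₀, g₁, h₀, h₁, hg₀, hg₁, hh₀, hh₁, hg, hh, hg₀0, hg₁1, hh₀0, hh₁1⟩
    obtain ⟨s, hs, hsr⟩ :=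
      (exists_factorization_zero_one_iff hb hab).mp ⟨g₀, g₁, hg₀, hg₁, hg, hg₀0, hg₁1⟩
    obtain ⟨p, hp, hpr⟩ :=
      (exists_factorization_one_zero_iff hb hab).mp ⟨h₀, h₁, hh₀, hh₁, hh, hh₀0, hh₁1⟩
    exact isStronglyClean_companion_of_roots hs hsr hp hpr

/-- For a local ring `R`, `M₂(R)` is strongly clean iff every monic quadratic polynomial
`f` over `R` admits factorizations `f = g₀g₁ = h₁h₀` into monic polynomials with
`g₀(0), g₁(1), h₀(0), h₁(1)` all units. -/
theorem matrix_two_stronglyClean_iff_factorization {R : Type*} [Ring R] [IsLocalRing R] :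
    (∀ A : Matrix (Fin 2) (Fin 2) R, IsStronglyClean A) ↔
      (∀ f : R[X], f.Monic → f.natDegree = 2 →
        ∃ g₀ g₁ h₀ h₁ : R[X], g₀.Monic ∧ g₁.Monic ∧ h₀.Monic ∧ h₁.Monic ∧
          f = g₀ * g₁ ∧ f = h₁ * h₀ ∧
          IsUnit (g₀.eval 0) ∧ IsUnit (g₁.eval 1) ∧
          IsUnit (h₀.eval 0) ∧ IsUnit (h₁.eval 1)) := by
  constructor
  · intro hSC f hm hd
    by_cases h₁ : IsUnit (f.eval 1)
    · exact ⟨1, f, 1, f, monic_one, hm, monic_one, hm, (one_mul f).symm, (mul_one f).symm,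
        by simp, h₁, by simp, h₁⟩
    by_cases h₀ : IsUnit (f.eval 0)
    · exact ⟨f, 1, f, 1, hm, monic_one, hm, monic_one, (mul_one f).symm, (one_mul f).symm,
        h₀, by simp, h₀, by simp⟩
    obtain ⟨a, b, rfl⟩ : ∃ a b, f = X ^ 2 + C a * X + C b :=
      ⟨_, _, hm.eq_X_sq_add_C_mul_X_add_C hd⟩
    exact (isStronglyClean_companion_iff (by simpa [eval_X_pow] using h₀)
      (by simpa [eval_X_pow] using h₁)).mp (hSC _)
  · intro hFac A
    by_cases hA : IsUnit A
    · exact isStronglyClean_of_isUnit hA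
    by_cases hA1 : IsUnit (A - 1)
    · exact isStronglyClean_of_isUnit_sub_one hA1
    obtain ⟨a, b, hconj⟩ := exists_isConj_companion hA hA1
    have hb : ¬IsUnit b := by rwa [← isUnit_companion_iff (a := a), ← hconj.isUnit_iff]
    have hab : ¬IsUnit (1 + a + b) := by
      rwa [← isUnit_companion_sub_one_iff, ← hconj.sub_one.isUnit_iff]
    refine hconj.symm.isStronglyClean ((isStronglyClean_companion_iff hb hab).mpr ?_)
    exact hFac _ (monic_X_sq_add_C_mul_X_add_C a b) (natDegree_X_sq_add_C_mul_X_add_C a b)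
end
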